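/- Let n ∈ {1, 2, 3, 4, 6}. Let A and A' be 2×2 integer matrices with rows (a, b), (c, d) and (a', b'), (c', d') respectively, such that a·d − b·c ∈ {1, −1}, a'·d' − b'·c' ∈ {1, −1}, |c| = n and |c'| = n. Then there exist matrices P₁ and P₂ in U such that A = P₂ · A' · P₁, where U denotes the set of 2×2 integer matrices of the form with rows (x, z), (0, y) with x, y ∈ {1, −1} and z ∈ ℤ. -/

import Mathlib

/-!
Reducing modulo `n = |c|`, the determinant condition makes `a` a unit of `ℤ/nℤ`; for
`n ∈ {1, 2, 3, 4, 6}` the only units are `±1`, so `a ≡ ±1 (mod n)`. Row operations by `U` on the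
left and column operations by `U` on the right then bring every such matrix to `!![1, 0; n, 1]`,
and since `U` is a group, any two such matrices lie in one double coset.
-/

def U : Set (Matrix (Fin 2) (Fin 2) ℤ) :=
  {M | ∃ x y z : ℤ, (x = 1 ∨ x = -1) ∧ (y = 1 ∨ y = -1) ∧ M = !![x, z; 0, y]}

lemma matrix_fin_two_ext {α : Type*} {a b c d a' b' c' d' : α}
    (ha : a = a') (hb : b = b') (hc : c = c') (hd : d = d') :
    !![a, b; c, d] = !![a', b'; c', d'] := by
  subst ha hb hc hd; rfl

lemma mem_U_of_isUnit {x y : ℤ} (hx : IsUnit x) (hy : IsUnit y) (z : ℤ) :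
    !![x, z; 0, y] ∈ U :=
  ⟨x, y, z, Int.isUnit_iff.mp hx, Int.isUnit_iff.mp hy, rfl⟩

lemma mul_mem_U {P Q : Matrix (Fin 2) (Fin 2) ℤ} (hP : P ∈ U) (hQ : Q ∈ U) : P * Q ∈ U := by
  obtain ⟨x, y, z, hx, hy, rfl⟩ := hP
  obtain ⟨x', y', z', hx', hy', rfl⟩ := hQ
  convert mem_U_of_isUnit ((Int.isUnit_iff.mpr hx).mul (Int.isUnit_iff.mpr hx'))
    ((Int.isUnit_iff.mpr hy).mul (Int.isUnit_iff.mpr hy')) (x * z' + z * y') using 1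
  rw [Matrix.mul_fin_two]
  apply matrix_fin_two_ext <;> ring

lemma exists_mem_U_inverse {P : Matrix (Fin 2) (Fin 2) ℤ} (hP : P ∈ U) :
    ∃ Q ∈ U, Q * P = 1 ∧ P * Q = 1 := by
  obtain ⟨x, y, z, hx, hy, rfl⟩ := hP
  have hx2 : x * x = 1 := Int.isUnit_mul_self (Int.isUnit_iff.mpr hx)
  have hy2 : y * y = 1 := Int.isUnit_mul_self (Int.isUnit_iff.mpr hy)
  refine ⟨!![x, -(x * z * y); 0, y], ⟨x, y, _, hx, hy, rfl⟩, ?_, ?_⟩ <;>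
    rw [Matrix.mul_fin_two, Matrix.one_fin_two] <;> apply matrix_fin_two_ext <;>
    grind

lemma ZMod.eq_one_or_eq_neg_one_of_isUnit {n : ℕ} (hn : n ∈ ({1, 2, 3, 4, 6} : Set ℕ))
    {u : ZMod n} (hu : IsUnit u) : u = 1 ∨ u = -1 := by
  simp only [Set.mem_insert_iff, Set.mem_singleton_iff] at hn
  rcases hn with rfl | rfl | rfl | rfl | rfl <;> revert u <;> decide

lemma exists_isUnit_add_mul_of_isUnit_intCast {n : ℕ}
    (hunits : ∀ u : ZMod n, IsUnit u → u = 1 ∨ u = -1) {a : ℤ} (ha : IsUnit (a : ZMod n)) :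
    ∃ ε k : ℤ, IsUnit ε ∧ a = ε + k * n := by
  rcases hunits _ ha with h | h
  · obtain ⟨k, hk⟩ := (ZMod.intCast_eq_intCast_iff_dvd_sub 1 a n).mp (by simpa using h.symm)
    exact ⟨1, k, isUnit_one, by linear_combination hk⟩
  · obtain ⟨k, hk⟩ := (ZMod.intCast_eq_intCast_iff_dvd_sub (-1) a n).mp (by simpa using h.symm)
    exact ⟨-1, k, isUnit_one.neg, by linear_combination hk⟩

lemma exists_mem_U_eq_mul_lowerUnitriangular_mul {n : ℕ}
    (hunits : ∀ u : ZMod n, IsUnit u → u = 1 ∨ u = -1) {a b c d : ℤ}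
    (hdet : IsUnit (a * d - b * c)) (hc : |c| = n) :
    ∃ P₁ ∈ U, ∃ P₂ ∈ U, !![a, b; c, d] = P₂ * !![1, 0; (n : ℤ), 1] * P₁ := by
  obtain ⟨s, hs, hcs⟩ : ∃ s : ℤ, IsUnit s ∧ c = s * n := by
    rcases (abs_eq (Int.natCast_nonneg n)).mp hc with h | h
    exacts [⟨1, isUnit_one, by simp [h]⟩, ⟨-1, isUnit_one.neg, by simp [h]⟩]
  have ha : IsUnit (a : ZMod n) := by
    have hdet_mod := hdet.map (Int.castRingHom (ZMod n))
    simp only [eq_intCast, Int.cast_sub, Int.cast_mul, hcs, Int.cast_natCast, ZMod.natCast_self,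
      mul_zero, sub_zero] at hdet_mod
    exact isUnit_of_mul_isUnit_left hdet_mod
  obtain ⟨ε, k, hε, rfl⟩ := exists_isUnit_add_mul_of_isUnit_intCast hunits ha
  subst hcs
  have hs2 := Int.isUnit_mul_self hs
  have hε2 := Int.isUnit_mul_self hε
  -- With `e` the determinant, `d = ε e + m n` for `m = ε (b s - k d)`; `P₁` clears `b` and `d`.
  refine ⟨!![1, s * (ε * (b * s - k * d)); 0, s * ε * ((ε + k * n) * d - b * (s * n))],
    mem_U_of_isUnit isUnit_one ((hs.mul hε).mul hdet) _,
    !![ε, k; 0, s], mem_U_of_isUnit hε hs _, ?_⟩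
  rw [Matrix.mul_fin_two, Matrix.mul_fin_two]
  apply matrix_fin_two_ext
  · ring
  · linear_combination (-b) * hε2 - b * ε * ε * hs2
  · ring
  · linear_combination (-d) * hε2 - d * ε * ε * hs2

/-- The double coset claim at the core of the gluing lemma: two integer matrices
with determinant `±1` whose lower-left entries have absolute value
`n ∈ {1, 2, 3, 4, 6}` lie in the same `U`-double coset. -/
theorem double_coset_of_det_pm_one (n : ℕ)
    (hn : n ∈ ({1, 2, 3, 4, 6} : Set ℕ))
    (a b c d a' b' c' d' : ℤ)
    (hdet : a * d - b * c = 1 ∨ a * d - b * c = -1)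
    (hdet' : a' * d' - b' * c' = 1 ∨ a' * d' - b' * c' = -1)
    (hc : |c| = (n : ℤ)) (hc' : |c'| = (n : ℤ)) :
    ∃ P₁ ∈ U, ∃ P₂ ∈ U,
      !![a, b; c, d] = P₂ * !![a', b'; c', d'] * P₁ := by
  have hunits : ∀ u : ZMod n, IsUnit u → u = 1 ∨ u = -1 :=
    fun _ ↦ ZMod.eq_one_or_eq_neg_one_of_isUnit hn
  obtain ⟨P₁, hP₁, P₂, hP₂, hA⟩ :=
    exists_mem_U_eq_mul_lowerUnitriangular_mul hunits (Int.isUnit_iff.mpr hdet) hc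
  obtain ⟨Q₁, hQ₁, Q₂, hQ₂, hA'⟩ :=
    exists_mem_U_eq_mul_lowerUnitriangular_mul hunits (Int.isUnit_iff.mpr hdet') hc'
  obtain ⟨R₁, hR₁, -, hQR₁⟩ := exists_mem_U_inverse hQ₁
  obtain ⟨R₂, hR₂, hRQ₂, -⟩ := exists_mem_U_inverse hQ₂
  refine ⟨R₁ * P₁, mul_mem_U hR₁ hP₁, P₂ * R₂, mul_mem_U hP₂ hR₂, ?_⟩
  calc !![a, b; c, d] = P₂ * (R₂ * Q₂) * !![1, 0; (n : ℤ), 1] * (Q₁ * R₁) * P₁ := by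
        rw [hA, hRQ₂, hQR₁, Matrix.mul_one, Matrix.mul_one]
    _ = P₂ * R₂ * !![a', b'; c', d'] * (R₁ * P₁) := by
        simp only [hA', Matrix.mul_assoc]
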